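/- Let x₁ be real, x₂ = x₁/2, and Q = 1 + x₁². Then atan((i·x₁ + 1)/√Q) - atan((i·x₁ - 1)/√Q) = π/2, where atan is the principal branch of the complex inverse tangent. -/

import Mathlib

/-!
With `z = (i x₁ + 1)/√Q`, the second argument is `-z̄`. Off the negative real axis
`log w̄ = conj (log w)`, so `atan z - atan (-z̄) = arg (1 + iz) - arg (1 - iz)`.
Writing `s = √Q`, the identity `s² - x₁² = 1` gives `1 + iz = i (s - x₁) (1 - iz)` with
`s - x₁ > 0`, and `1 - iz` lies in the right half-plane, so multiplying it by
`i (s - x₁)` raises its argument by exactly `π/2`.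
-/

open Complex

/-- The principal branch of the complex inverse tangent,
`atan z = (i/2)(log(1 - iz) - log(1 + iz))`. -/
noncomputable def catan (z : ℂ) : ℂ :=
  I / 2 * (Complex.log (1 - I * z) - Complex.log (1 + I * z))

open ComplexConjugate

lemma log_sub_log_conj {z : ℂ} (hz : z.arg ≠ Real.pi) :
    log z - log (conj z) = 2 * z.arg * I := by
  rw [log_conj z hz, sub_conj, log_im]
  push_cast
  ring

lemma catan_sub_catan_neg_conj {z : ℂ} (hu : (1 - I * z).arg ≠ Real.pi)
    (hv : (1 + I * z).arg ≠ Real.pi) :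
    catan z - catan (-conj z) = (1 + I * z).arg - (1 - I * z).arg := by
  have hconj_u : 1 - I * -conj z = conj (1 - I * z) := by simp
  have hconj_v : 1 + I * -conj z = conj (1 + I * z) := by simp
  simp only [catan, hconj_u, hconj_v]
  linear_combination (I / 2) * log_sub_log_conj hu - (I / 2) * log_sub_log_conj hv
    + ((1 - I * z).arg - (1 + I * z).arg) * I_sq

lemma arg_I_mul_of_re_pos {u : ℂ} (hu : 0 < u.re) : (I * u).arg = Real.pi / 2 + u.arg := by
  have hlt : u.arg < Real.pi / 2 := arg_lt_pi_div_two_iff.mpr (Or.inl hu)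
  have hgt : -(Real.pi / 2) < u.arg := neg_pi_div_two_lt_arg_iff.mpr (Or.inl hu)
  have hmem : I.arg + u.arg ∈ Set.Ioc (-Real.pi) Real.pi := by
    rw [arg_I]
    constructor <;> linarith [Real.pi_pos]
  rw [(arg_mul_eq_add_arg_iff I_ne_zero (ne_zero_of_re_pos hu)).mpr hmem, arg_I]

lemma catan_sub_catan_neg_conj_eq_pi_div_two {z : ℂ} {r : ℝ} (hr : 0 < r)
    (hu : 0 < (1 - I * z).re) (hv : 1 + I * z = r * (I * (1 - I * z))) :
    catan z - catan (-conj z) = Real.pi / 2 := by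
  have harg_v : (1 + I * z).arg = Real.pi / 2 + (1 - I * z).arg := by
    rw [hv, arg_real_mul _ hr, arg_I_mul_of_re_pos hu]
  have hlt : (1 - I * z).arg < Real.pi / 2 := arg_lt_pi_div_two_iff.mpr (Or.inl hu)
  rw [catan_sub_catan_neg_conj, harg_v]
  · push_cast
    ring
  · exact (hlt.trans (by linarith [Real.pi_pos])).ne
  · rw [harg_v]
    linarith

/-- For real `x₁` and `Q = 1 + x₁²`,
`atan((i x₁ + 1)/√Q) - atan((i x₁ - 1)/√Q) = π/2`. -/
theorem stmt17 (x₁ : ℝ) :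
    catan ((I * x₁ + 1) / (Real.sqrt (1 + x₁ ^ 2) : ℂ))
      - catan ((I * x₁ - 1) / (Real.sqrt (1 + x₁ ^ 2) : ℂ))
      = Real.pi / 2 := by
  set s := Real.sqrt (1 + x₁ ^ 2)
  have hs2 : s ^ 2 = 1 + x₁ ^ 2 := Real.sq_sqrt (by positivity)
  have hs2C : (s : ℂ) ^ 2 = 1 + x₁ ^ 2 := by exact_mod_cast hs2
  have hs : 0 < s := Real.sqrt_pos.mpr (by positivity)
  have hxs : |x₁| < s := abs_lt_of_sq_lt_sq (by linarith) hs.le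
  have hsC : (s : ℂ) ≠ 0 := by exact_mod_cast hs.ne'
  set z := (I * x₁ + 1) / (s : ℂ)
  have h_one_sub : 1 - I * z = (s + x₁ - I) / s := by
    simp only [z]
    field_simp
    linear_combination (-x₁ : ℂ) * I_sq
  have h_one_add : 1 + I * z = (s - x₁ + I) / s := by
    simp only [z]
    field_simp
    linear_combination (x₁ : ℂ) * I_sq
  have hneg_conj : (I * x₁ - 1) / (s : ℂ) = -conj z := by
    simp [z, map_div₀]
    ring
  rw [hneg_conj]
  refine catan_sub_catan_neg_conj_eq_pi_div_two (r := s - x₁) (by linarith [le_abs_self x₁]) ?_ ?_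
  · rw [h_one_sub]
    simpa using div_pos (by linarith [neg_abs_le x₁] : 0 < s + x₁) hs
  · rw [h_one_sub, h_one_add]
    field_simp
    push_cast
    linear_combination ((s : ℂ) - x₁) * I_sq - I * hs2C
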